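/- arXiv:1811.10072 — 6 statements merged into one kernel-verified Lean document; each statement's English description precedes it below -/
import Mathlib

section
/- Consider the SGLD recursion for one-dimensional Bayesian linear regression started at θ⋆: θ_{k+1} = θ_k - γ(Σ(θ_k - θ⋆) + ρ(S_{k+1})(θ_k - θ⋆) + ξ(S_{k+1})) + √(2γ) Z_{k+1}, where Z_k are i.i.d. standard Gaussians and S_k are i.i.d. uniform subsamples with replacement of size p from {1,...,N}, independent of the Z's. Then for every k, E[θ_k] = θ⋆, and the variance satisfies the exact recursion E[(θ_{k+1} - θ⋆)²] = μ E[(θ_k - θ⋆)²] + 2γ + γ² A, where μ = E[(1 - γ(1/σ_p² + (N/(σ_y² p)) Σ_{i∈S} x_i²))²] and A = (N/p) Σ_{i=1}^N ((x_i θ⋆ - y_i) x_i / σ_y² + θ⋆/(N σ_p²))². -/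
/-!
Write `D_k = θ_k - θ⋆`. Since `Σ θ⋆ = ∑ x_i y_i / σ_y²`, the recursion reads
`D_{k+1} = a(S_{k+1}) D_k + (√(2γ) Z_{k+1} - γ ξ(S_{k+1}))` with
`a(S) = 1 - γ (1/σ_p² + (N/(p σ_y²)) ∑_{i∈S} x_i²)`, and `ξ(S) = (N/p) ∑_{j} g(S_j)` where the
`g(i)` are the summands of `∇U(θ⋆) = 0`. Hence `ξ(S)` has mean zero over a uniform sample, and
since its coordinates are i.i.d. its second moment is `(N/p)² · p · 𝔼[g²] = A`.
Independence of `D_k` from `(S_{k+1}, Z_{k+1})` and of `S_{k+1}` from `Z_{k+1}` makes every cross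
term factor through a centred expectation, which gives both recursions.
-/

open MeasureTheory ProbabilityTheory

section SumOverSamples

lemma sum_cons_comp {α : Type*} (f : α → ℝ) {q : ℕ} (a : α) (t : Fin q → α) :
    ∑ j, f ((Fin.cons a t : Fin (q + 1) → α) j) = f a + ∑ j, f (t j) := by
  simp [Fin.sum_univ_succ]

variable {α : Type*} [Fintype α] (f : α → ℝ)

lemma sum_fun_fin_succ {q : ℕ} (g : (Fin (q + 1) → α) → ℝ) :
    ∑ s, g s = ∑ a, ∑ t : Fin q → α, g (Fin.cons a t) := by
  rw [← (Fin.consEquiv fun _ => α).sum_comp, Fintype.sum_prod_type]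
  rfl

lemma sum_fun_sum_comp_eq_zero (hf : ∑ a, f a = 0) (q : ℕ) :
    ∑ s : Fin q → α, ∑ j, f (s j) = 0 := by
  induction q with
  | zero => simp
  | succ q ih =>
    simp only [sum_fun_fin_succ, sum_cons_comp, Finset.sum_add_distrib, ih, Finset.sum_const,
      Finset.card_univ, nsmul_eq_mul, add_zero, ← Finset.mul_sum, hf, mul_zero]

lemma sum_fun_sq_sum_comp_div_card (hf : ∑ a, f a = 0) (q : ℕ) :
    (∑ s : Fin q → α, (∑ j, f (s j)) ^ 2) / Fintype.card (Fin q → α)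
      = q * (∑ a, f a ^ 2) / Fintype.card α := by
  rcases isEmpty_or_nonempty α with hα | hα
  · rcases q with _ | q <;> simp
  have hcard : (Fintype.card α : ℝ) ≠ 0 := by positivity
  induction q with
  | zero => simp
  | succ q ih =>
    have hstep : ∑ s : Fin (q + 1) → α, (∑ j, f (s j)) ^ 2
        = Fintype.card (Fin q → α) * ∑ a, f a ^ 2
          + Fintype.card α * ∑ t : Fin q → α, (∑ j, f (t j)) ^ 2 := by
      simp only [sum_fun_fin_succ, sum_cons_comp, add_sq, Finset.sum_add_distrib, Finset.sum_const,
        Finset.card_univ, nsmul_eq_mul, ← Finset.mul_sum, sum_fun_sum_comp_eq_zero f hf,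
        mul_zero, add_zero]
    simp only [Fintype.card_fun, Fintype.card_fin, Nat.cast_pow] at ih hstep ⊢
    rw [div_eq_iff (pow_ne_zero q hcard)] at ih
    rw [hstep, ih]
    field_simp
    push_cast
    ring

end SumOverSamples

section LinearRegression

variable {N p : ℕ} (x y : Fin N → ℝ) (σy2 σp2 θs : ℝ)

-- `subsampleGrad s` is the paper's `ξ(S)`, and `∇U(θ⋆) = ∑ i, gradSummand i`.
noncomputable def gradSummand (i : Fin N) : ℝ :=
  (x i * θs - y i) * x i / σy2 + θs / ((N : ℝ) * σp2)

noncomputable def subsampleGrad (s : Fin p → Fin N) : ℝ :=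
  θs / σp2 + ((N : ℝ) / ((p : ℝ) * σy2)) * ∑ j, (x (s j) * θs - y (s j)) * x (s j)

lemma subsampleGrad_eq (hN : N ≠ 0) (hp : p ≠ 0) (s : Fin p → Fin N) :
    subsampleGrad x y σy2 σp2 θs s = (N / p) * ∑ j, gradSummand x y σy2 σp2 θs (s j) := by
  simp only [subsampleGrad, gradSummand, Finset.sum_add_distrib, Finset.sum_const,
    Finset.card_univ, Fintype.card_fin, nsmul_eq_mul, ← Finset.sum_div]
  field_simp
  ring

lemma sum_gradSummand_eq_zero (hN : N ≠ 0)
    (hθs : (1 / σp2 + ∑ i, x i ^ 2 / σy2) * θs = (∑ i, x i * y i) / σy2) :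
    ∑ i, gradSummand x y σy2 σp2 θs i = 0 := by
  simp only [gradSummand, Finset.sum_add_distrib, Finset.sum_const, Finset.card_univ,
    Fintype.card_fin, nsmul_eq_mul, ← Finset.sum_div]
  have hsum : ∑ i, (x i * θs - y i) * x i = θs * ∑ i, x i ^ 2 - ∑ i, x i * y i := by
    rw [Finset.mul_sum, ← Finset.sum_sub_distrib]
    exact Finset.sum_congr rfl fun i _ => by ring
  have hprior : (N : ℝ) * (θs / (N * σp2)) = θs / σp2 := by field_simp
  rw [← Finset.sum_div] at hθs
  rw [hsum, hprior]
  linear_combination hθs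

variable {x y σy2 σp2 θs}

lemma sum_subsampleGrad_eq_zero (hN : N ≠ 0) (hp : p ≠ 0)
    (hθs : (1 / σp2 + ∑ i, x i ^ 2 / σy2) * θs = (∑ i, x i * y i) / σy2) :
    ∑ s : Fin p → Fin N, subsampleGrad x y σy2 σp2 θs s = 0 := by
  simp only [subsampleGrad_eq x y σy2 σp2 θs hN hp, ← Finset.mul_sum,
    sum_fun_sum_comp_eq_zero _ (sum_gradSummand_eq_zero x y σy2 σp2 θs hN hθs), mul_zero]

lemma sum_subsampleGrad_sq_div_card (hN : N ≠ 0) (hp : p ≠ 0)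
    (hθs : (1 / σp2 + ∑ i, x i ^ 2 / σy2) * θs = (∑ i, x i * y i) / σy2) :
    (∑ s : Fin p → Fin N, subsampleGrad x y σy2 σp2 θs s ^ 2) / Fintype.card (Fin p → Fin N)
      = (N / p) * ∑ i, gradSummand x y σy2 σp2 θs i ^ 2 := by
  simp only [subsampleGrad_eq x y σy2 σp2 θs hN hp, mul_pow, ← Finset.mul_sum, mul_div_assoc,
    sum_fun_sq_sum_comp_div_card _ (sum_gradSummand_eq_zero x y σy2 σp2 θs hN hθs),
    Fintype.card_fin]
  field_simp

end LinearRegression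

section Moments

variable {Ω α : Type*} [MeasurableSpace Ω] {μ : Measure Ω}

lemma integral_add_sq_of_integral_mul_eq_zero {U V : Ω → ℝ} (hU : MemLp U 2 μ)
    (hV : MemLp V 2 μ) (hUV : ∫ ω, U ω * V ω ∂μ = 0) :
    ∫ ω, (U ω + V ω) ^ 2 ∂μ = ∫ ω, U ω ^ 2 ∂μ + ∫ ω, V ω ^ 2 ∂μ := by
  have hU2 := hU.integrable_sq
  have hV2 := hV.integrable_sq
  have hUV' : Integrable (fun ω => 2 * (U ω * V ω)) μ := (hU.integrable_mul hV).const_mul 2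
  calc ∫ ω, (U ω + V ω) ^ 2 ∂μ = ∫ ω, (U ω ^ 2 + V ω ^ 2 + 2 * (U ω * V ω)) ∂μ := by
        congr 1 with ω; ring
    _ = ∫ ω, U ω ^ 2 ∂μ + ∫ ω, V ω ^ 2 ∂μ := by
        rw [integral_add (hU2.fun_add hV2) hUV', integral_add hU2 hV2, integral_const_mul, hUV,
          mul_zero, add_zero]

variable [IsProbabilityMeasure μ] [Finite α] [MeasurableSpace α] [MeasurableSingletonClass α]

lemma memLp_comp_of_finite {S : Ω → α} (hS : Measurable S) (f : α → ℝ) (q : ENNReal) :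
    MemLp (fun ω => f (S ω)) q μ := by
  obtain ⟨C, hC⟩ := (Set.finite_range fun s => ‖f s‖).bddAbove
  exact MemLp.of_bound ((measurable_of_finite f).comp hS).aestronglyMeasurable C
    (ae_of_all _ fun ω => hC ⟨S ω, rfl⟩)

variable {D Z : Ω → ℝ} {S : Ω → α} (a b : α → ℝ) (c : ℝ)

lemma integral_mul_comp_add (hD : Integrable D μ) (hS : Measurable S)
    (hDS : IndepFun D S μ) (hZ : Integrable Z μ) (hZ0 : ∫ ω, Z ω ∂μ = 0)
    (hb0 : ∫ ω, b (S ω) ∂μ = 0) :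
    ∫ ω, (D ω * a (S ω) + (c * Z ω + b (S ω))) ∂μ = (∫ ω, D ω ∂μ) * ∫ ω, a (S ω) ∂μ := by
  have haS := (memLp_comp_of_finite (μ := μ) hS a 1).integrable le_rfl
  have hbS := (memLp_comp_of_finite (μ := μ) hS b 1).integrable le_rfl
  have hDa : IndepFun D (fun ω => a (S ω)) μ := hDS.comp measurable_id (measurable_of_finite a)
  have hnoise : Integrable (fun ω => c * Z ω + b (S ω)) μ := (hZ.const_mul c).add hbS
  have hDaS : Integrable (fun ω => D ω * a (S ω)) μ := hDa.integrable_mul hD haS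
  rw [integral_add hDaS hnoise, integral_add (hZ.const_mul c) hbS,
    integral_const_mul, hZ0, hb0, hDa.integral_fun_mul_eq_mul_integral hD.aestronglyMeasurable
      haS.aestronglyMeasurable, mul_zero, zero_add, add_zero]

lemma integral_mul_comp_add_sq (hD : MemLp D 2 μ) (hD0 : ∫ ω, D ω ∂μ = 0) (hS : Measurable S)
    (hDSZ : IndepFun D (fun ω => (S ω, Z ω)) μ) (hSZ : IndepFun S Z μ) (hZ : MemLp Z 2 μ)
    (hZ0 : ∫ ω, Z ω ∂μ = 0) :
    ∫ ω, (D ω * a (S ω) + (c * Z ω + b (S ω))) ^ 2 ∂μ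
      = (∫ ω, D ω ^ 2 ∂μ) * (∫ ω, a (S ω) ^ 2 ∂μ)
        + (c ^ 2 * ∫ ω, Z ω ^ 2 ∂μ + ∫ ω, b (S ω) ^ 2 ∂μ) := by
  have ha : Measurable a := measurable_of_finite a
  have hb : Measurable b := measurable_of_finite b
  have haS : MemLp (fun ω => a (S ω)) ⊤ μ := memLp_comp_of_finite hS a ⊤
  have hbS : MemLp (fun ω => b (S ω)) 2 μ := memLp_comp_of_finite hS b 2
  have hcZ : MemLp (fun ω => c * Z ω) 2 μ := hZ.const_mul c
  have hDa : MemLp (fun ω => D ω * a (S ω)) 2 μ := by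
    simpa only [mul_comm] using hD.mul' haS
  have hnoise : MemLp (fun ω => c * Z ω + b (S ω)) 2 μ := hcZ.add hbS
  have hD2a2 : IndepFun (fun ω => D ω ^ 2) (fun ω => a (S ω) ^ 2) μ :=
    hDSZ.comp (measurable_id.pow_const 2) ((ha.comp measurable_fst).pow_const 2)
  have hDan : IndepFun D (fun ω => a (S ω) * (c * Z ω + b (S ω))) μ :=
    hDSZ.comp measurable_id ((ha.comp measurable_fst).mul
      ((measurable_snd.const_mul c).add (hb.comp measurable_fst)))
  have hZb : IndepFun Z (fun ω => b (S ω)) μ := hSZ.symm.comp measurable_id hb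
  have hcross : ∫ ω, D ω * a (S ω) * (c * Z ω + b (S ω)) ∂μ = 0 := by
    simp_rw [mul_assoc]
    rw [hDan.integral_fun_mul_eq_mul_integral hD.aestronglyMeasurable
      (haS.aestronglyMeasurable.mul hnoise.aestronglyMeasurable), hD0, zero_mul]
  have hnoise_sq : ∫ ω, (c * Z ω + b (S ω)) ^ 2 ∂μ
      = c ^ 2 * ∫ ω, Z ω ^ 2 ∂μ + ∫ ω, b (S ω) ^ 2 ∂μ := by
    rw [integral_add_sq_of_integral_mul_eq_zero hcZ hbS]
    · simp_rw [mul_pow, integral_const_mul]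
    · simp_rw [mul_assoc, integral_const_mul]
      rw [hZb.integral_fun_mul_eq_mul_integral hZ.aestronglyMeasurable hbS.aestronglyMeasurable,
        hZ0, zero_mul, mul_zero]
  rw [integral_add_sq_of_integral_mul_eq_zero hDa hnoise hcross, hnoise_sq]
  simp_rw [mul_pow]
  rw [hD2a2.integral_fun_mul_eq_mul_integral hD.integrable_sq.aestronglyMeasurable
    ((ha.comp hS).pow_const 2).aestronglyMeasurable]

lemma integral_eq_zero_of_recursion {D Z : ℕ → Ω → ℝ} {S : ℕ → Ω → α}
    (hstep : ∀ k ω, D (k + 1) ω = D k ω * a (S (k + 1) ω) + (c * Z (k + 1) ω + b (S (k + 1) ω)))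
    (hD0 : ∫ ω, D 0 ω ∂μ = 0) (hD : ∀ k, Integrable (D k) μ) (hS : ∀ k, Measurable (S k))
    (hDS : ∀ k, IndepFun (D k) (S (k + 1)) μ) (hZ : ∀ k, Integrable (Z k) μ)
    (hZ0 : ∀ k, ∫ ω, Z k ω ∂μ = 0) (hb0 : ∀ k, ∫ ω, b (S k ω) ∂μ = 0) (k : ℕ) :
    ∫ ω, D k ω ∂μ = 0 := by
  induction k with
  | zero => exact hD0
  | succ k ih =>
    simp_rw [hstep k]
    rw [integral_mul_comp_add a b c (hD k) (hS _) (hDS k) (hZ _) (hZ0 _) (hb0 _), ih, zero_mul]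

lemma integral_sq_of_hasLaw_gaussianReal {Z : Ω → ℝ} {m : ℝ} {v : NNReal}
    (hZ : HasLaw Z (gaussianReal m v) μ) : ∫ ω, Z ω ^ 2 ∂μ = v + m ^ 2 := by
  have h := variance_eq_sub hZ.hasGaussianLaw.memLp_two
  rw [hZ.variance_eq, variance_id_gaussianReal, hZ.integral_eq, integral_id_gaussianReal] at h
  simp only [Pi.pow_apply] at h
  linarith

end Moments

theorem stmt3_general {Ω : Type*} [MeasurableSpace Ω] {μ : Measure Ω} [IsProbabilityMeasure μ]
    (N p : ℕ) (hN : 0 < N) (hp : 0 < p)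
    (x y : Fin N → ℝ) (σy2 σp2 γ : ℝ) (hσy : 0 < σy2) (hσp : 0 < σp2) (hγ : 0 < γ)
    (Sig θs : ℝ)
    (hSig : Sig = 1 / σp2 + ∑ i, x i ^ 2 / σy2)
    (hθs : θs = Sig⁻¹ * (∑ i, x i * y i) / σy2)
    (θ : ℕ → Ω → ℝ) (S : ℕ → Ω → (Fin p → Fin N)) (Z : ℕ → Ω → ℝ)
    (hmeasS : ∀ k, Measurable (S k))
    (hmeasZ : ∀ k, Measurable (Z k))
    (hθ0 : ∀ ω, θ 0 ω = θs)
    -- `Z_k` are standard Gaussians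
    (hZlaw : ∀ k, μ.map (Z k) = gaussianReal 0 1)
    -- `S_k` are uniform subsamples with replacement of size `p` of `{1,…,N}`
    (hSlaw : ∀ k (f : (Fin p → Fin N) → ℝ),
      ∫ ω, f (S k ω) ∂μ = (∑ s : Fin p → Fin N, f s) / (Fintype.card (Fin p → Fin N)))
    -- independence: `(S_{k+1}, Z_{k+1})` is independent of `θ_k`, and `S_{k+1} ⟂ Z_{k+1}`
    (hindep1 : ∀ k, IndepFun (θ k) (fun ω => (S (k + 1) ω, Z (k + 1) ω)) μ)
    (hindep2 : ∀ k, IndepFun (S (k + 1)) (Z (k + 1)) μ)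
    (hL2 : ∀ k, MemLp (θ k) 2 μ)
    -- the SGLD recursion `θ_{k+1} = θ_k - γ(Σ(θ_k-θ⋆) + ρ(S_{k+1})(θ_k-θ⋆) + ξ(S_{k+1})) + √(2γ) Z_{k+1}`
    (hrec : ∀ k ω, θ (k + 1) ω = θ k ω
      - γ * (Sig * (θ k ω - θs)
        + (1 / σp2 + ((N : ℝ) / ((p : ℝ) * σy2)) * (∑ j : Fin p, x (S (k + 1) ω j) ^ 2) - Sig)
            * (θ k ω - θs)
        + (θs / σp2 + ((N : ℝ) / ((p : ℝ) * σy2))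
            * ∑ j : Fin p, (x (S (k + 1) ω j) * θs - y (S (k + 1) ω j)) * x (S (k + 1) ω j)))
      + Real.sqrt (2 * γ) * Z (k + 1) ω) :
    (∀ k, ∫ ω, θ k ω ∂μ = θs) ∧
    (∀ k, ∫ ω, (θ (k + 1) ω - θs) ^ 2 ∂μ
      = ((∑ s : Fin p → Fin N,
            (1 - γ * (1 / σp2 + ((N : ℝ) / (σy2 * (p : ℝ))) * ∑ j : Fin p, x (s j) ^ 2)) ^ 2)
            / (Fintype.card (Fin p → Fin N)))
          * ∫ ω, (θ k ω - θs) ^ 2 ∂μ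
        + 2 * γ
        + γ ^ 2 * (((N : ℝ) / (p : ℝ))
            * ∑ i, ((x i * θs - y i) * x i / σy2 + θs / ((N : ℝ) * σp2)) ^ 2)) := by
  have hnormal : (1 / σp2 + ∑ i, x i ^ 2 / σy2) * θs = (∑ i, x i * y i) / σy2 := by
    have hSig0 : Sig ≠ 0 := by rw [hSig]; positivity
    rw [← hSig, hθs]
    field_simp
  set a : (Fin p → Fin N) → ℝ := fun s =>
    1 - γ * (1 / σp2 + ((N : ℝ) / (σy2 * (p : ℝ))) * ∑ j : Fin p, x (s j) ^ 2) with ha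
  set b : (Fin p → Fin N) → ℝ := fun s => -γ * subsampleGrad x y σy2 σp2 θs s with hb
  have hstep : ∀ k ω, θ (k + 1) ω - θs
      = (θ k ω - θs) * a (S (k + 1) ω) + (√(2 * γ) * Z (k + 1) ω + b (S (k + 1) ω)) := by
    intro k ω
    simp only [hrec, ha, hb, subsampleGrad]
    ring
  have hZ : ∀ k, HasLaw (Z k) (gaussianReal 0 1) μ := fun k => ⟨(hmeasZ k).aemeasurable, hZlaw k⟩
  have hZ0 : ∀ k, ∫ ω, Z k ω ∂μ = 0 := fun k => by
    rw [(hZ k).integral_eq, integral_id_gaussianReal]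
  have hb0 : ∀ k, ∫ ω, b (S k ω) ∂μ = 0 := fun k => by
    rw [hSlaw, hb, ← Finset.mul_sum, sum_subsampleGrad_eq_zero hN.ne' hp.ne' hnormal, mul_zero, zero_div]
  have hD : ∀ k, MemLp (fun ω => θ k ω - θs) 2 μ := fun k => (hL2 k).sub (memLp_const θs)
  have hmean : ∀ k, ∫ ω, (θ k ω - θs) ∂μ = 0 :=
    integral_eq_zero_of_recursion a b _ hstep (by simp [hθ0])
      (fun k => (hD k).integrable one_le_two) hmeasS
      (fun k => (hindep1 k).comp (measurable_id.sub_const θs) measurable_fst)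
      (fun k => (hZ k).hasGaussianLaw.integrable) hZ0 hb0
  refine ⟨fun k => ?_, fun k => ?_⟩
  · have h := hmean k
    rwa [integral_sub ((hL2 k).integrable one_le_two) (integrable_const θs), integral_const,
      probReal_univ, one_smul, sub_eq_zero] at h
  · simp_rw [hstep k]
    rw [integral_mul_comp_add_sq a b _ (hD k) (hmean k) (hmeasS _)
      ((hindep1 k).comp (measurable_id.sub_const θs) measurable_id) (hindep2 k)
      (hZ _).hasGaussianLaw.memLp_two (hZ0 _), hSlaw _ fun s => a s ^ 2, hSlaw _ fun s => b s ^ 2]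
    simp only [hb, mul_pow, neg_sq, ← Finset.mul_sum, mul_div_assoc,
      sum_subsampleGrad_sq_div_card hN.ne' hp.ne' hnormal, integral_sq_of_hasLaw_gaussianReal (hZ _),
      Real.sq_sqrt (by positivity : 0 ≤ 2 * γ), gradSummand]
    push_cast
    ring

/-- Exact mean and variance recursion for SGLD in one-dimensional Bayesian linear
regression, started at the posterior mode `θ⋆`. -/
theorem stmt3 {Ω : Type*} [MeasurableSpace Ω] {μ : Measure Ω} [IsProbabilityMeasure μ]
    (N p : ℕ) (hN : 0 < N) (hp : 0 < p)
    (x y : Fin N → ℝ) (σy2 σp2 γ : ℝ) (hσy : 0 < σy2) (hσp : 0 < σp2) (hγ : 0 < γ)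
    (Sig θs : ℝ)
    (hSig : Sig = 1 / σp2 + ∑ i, x i ^ 2 / σy2)
    (hθs : θs = Sig⁻¹ * (∑ i, x i * y i) / σy2)
    (θ : ℕ → Ω → ℝ) (S : ℕ → Ω → (Fin p → Fin N)) (Z : ℕ → Ω → ℝ)
    (hmeasθ : ∀ k, Measurable (θ k)) (hmeasS : ∀ k, Measurable (S k))
    (hmeasZ : ∀ k, Measurable (Z k))
    (hθ0 : ∀ ω, θ 0 ω = θs)
    -- `Z_k` are standard Gaussians
    (hZlaw : ∀ k, μ.map (Z k) = gaussianReal 0 1)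
    -- `S_k` are uniform subsamples with replacement of size `p` of `{1,…,N}`
    (hSlaw : ∀ k (f : (Fin p → Fin N) → ℝ),
      ∫ ω, f (S k ω) ∂μ = (∑ s : Fin p → Fin N, f s) / (Fintype.card (Fin p → Fin N)))
    -- independence: `(S_{k+1}, Z_{k+1})` is independent of `θ_k`, and `S_{k+1} ⟂ Z_{k+1}`
    (hindep1 : ∀ k, IndepFun (θ k) (fun ω => (S (k + 1) ω, Z (k + 1) ω)) μ)
    (hindep2 : ∀ k, IndepFun (S (k + 1)) (Z (k + 1)) μ)
    (hL2 : ∀ k, MemLp (θ k) 2 μ)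
    -- the SGLD recursion `θ_{k+1} = θ_k - γ(Σ(θ_k-θ⋆) + ρ(S_{k+1})(θ_k-θ⋆) + ξ(S_{k+1})) + √(2γ) Z_{k+1}`
    (hrec : ∀ k ω, θ (k + 1) ω = θ k ω
      - γ * (Sig * (θ k ω - θs)
        + (1 / σp2 + ((N : ℝ) / ((p : ℝ) * σy2)) * (∑ j : Fin p, x (S (k + 1) ω j) ^ 2) - Sig)
            * (θ k ω - θs)
        + (θs / σp2 + ((N : ℝ) / ((p : ℝ) * σy2))
            * ∑ j : Fin p, (x (S (k + 1) ω j) * θs - y (S (k + 1) ω j)) * x (S (k + 1) ω j)))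
      + Real.sqrt (2 * γ) * Z (k + 1) ω) :
    (∀ k, ∫ ω, θ k ω ∂μ = θs) ∧
    (∀ k, ∫ ω, (θ (k + 1) ω - θs) ^ 2 ∂μ
      = ((∑ s : Fin p → Fin N,
            (1 - γ * (1 / σp2 + ((N : ℝ) / (σy2 * (p : ℝ))) * ∑ j : Fin p, x (s j) ^ 2)) ^ 2)
            / (Fintype.card (Fin p → Fin N)))
          * ∫ ω, (θ k ω - θs) ^ 2 ∂μ
        + 2 * γ
        + γ ^ 2 * (((N : ℝ) / (p : ℝ))
            * ∑ i, ((x i * θs - y i) * x i / σy2 + θs / ((N : ℝ) * σp2)) ^ 2)) :=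
  stmt3_general N p hN hp x y σy2 σp2 γ hσy hσp hγ Sig θs hSig hθs θ S Z hmeasS hmeasZ hθ0 hZlaw
    hSlaw hindep1 hindep2 hL2 hrec
end

section
/- Let μ₁ = N(m₁, v₁) and μ₂ = N(m₂, v₂) be one-dimensional Gaussian measures with means m₁ = m₂ and variances v₁, v₂ ≥ 0. Then the Wasserstein-2 distance between them equals |√v₁ - √v₂|. In particular, for the n-step SGLD and SGLDFP chains in one-dimensional Bayesian linear regression (both started at θ⋆, with the same mean θ⋆ and variances v_SGLD = (1-μⁿ)/(1-μ) (2γ + γ²A) and v_FP = (1-μⁿ)/(1-μ) (2γ)), one gets W₂(law of SGLD iterate, law of SGLDFP iterate) ≥ ((1-μⁿ)/(1-μ))^{1/2} (√(2γ + γ²A) - √(2γ)). -/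
/-!
For any coupling `ξ` of `λ` and `ν` and any centre `c`, the transport cost `∫ (x - y)² dξ` is the
squared `L²(ξ)` distance between `x - c` and `y - c`, so the reverse triangle inequality in `L²(ξ)`
bounds it below by `(√∫ (x - c)² dλ - √∫ (y - c)² dν)²`. For Gaussians with a common mean `m`
the bound is attained by the coupling `z ↦ (√v₁ z + m, √v₂ z + m)` of a standard normal `z`.
-/

open MeasureTheory ProbabilityTheory

/-- The Wasserstein distance of order 2 between two probability measures on `ℝ`,
defined as the infimum over couplings of the `L²` transport cost. -/
noncomputable def W2 (lam nu : Measure ℝ) : ℝ :=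
  sInf { r : ℝ | ∃ ξ : Measure (ℝ × ℝ), IsProbabilityMeasure ξ ∧
    ξ.map Prod.fst = lam ∧ ξ.map Prod.snd = nu ∧
    r = (∫ q, (q.1 - q.2) ^ 2 ∂ξ) ^ ((1 : ℝ) / 2) }

section lpNorm

variable {α : Type*} [MeasurableSpace α] {μ : Measure α}

lemma lpNorm_two_eq_sqrt_integral_sq {f : α → ℝ} (hf : AEStronglyMeasurable f μ) :
    lpNorm f 2 μ = √(∫ x, f x ^ 2 ∂μ) := by
  rw [lpNorm_eq_integral_norm_rpow_toReal two_ne_zero ENNReal.ofNat_ne_top hf, Real.sqrt_eq_rpow]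
  norm_num

lemma abs_lpNorm_sub_lpNorm_le {E : Type*} [NormedAddCommGroup E] {f g : α → E} {p : ENNReal}
    (hf : MemLp f p μ) (hg : MemLp g p μ) (hp : 1 ≤ p) :
    |lpNorm f p μ - lpNorm g p μ| ≤ lpNorm (f - g) p μ := by
  rw [abs_sub_le_iff]
  constructor
  · linarith [lpNorm_le_lpNorm_add_lpNorm_sub' (f := f) hg hp]
  · linarith [lpNorm_le_lpNorm_add_lpNorm_sub (f := g) hf hp]

end lpNorm

lemma abs_sqrt_sub_sqrt_le_of_coupling {ξ : Measure (ℝ × ℝ)} [IsFiniteMeasure ξ]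
    {lam nu : Measure ℝ} (hfst : ξ.map Prod.fst = lam) (hsnd : ξ.map Prod.snd = nu)
    (hlam : MemLp id 2 lam) (hnu : MemLp id 2 nu) (c : ℝ) :
    |√(∫ t, (t - c) ^ 2 ∂lam) - √(∫ t, (t - c) ^ 2 ∂nu)| ≤ √(∫ q, (q.1 - q.2) ^ 2 ∂ξ) := by
  subst hfst hsnd
  have hX : MemLp (fun q : ℝ × ℝ => q.1 - c) 2 ξ :=
    ((memLp_map_measure_iff aestronglyMeasurable_id measurable_fst.aemeasurable).mp hlam).sub
      (memLp_const c)
  have hY : MemLp (fun q : ℝ × ℝ => q.2 - c) 2 ξ :=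
    ((memLp_map_measure_iff aestronglyMeasurable_id measurable_snd.aemeasurable).mp hnu).sub
      (memLp_const c)
  have key := abs_lpNorm_sub_lpNorm_le hX hY one_le_two
  rw [lpNorm_two_eq_sqrt_integral_sq hX.1, lpNorm_two_eq_sqrt_integral_sq hY.1,
    lpNorm_two_eq_sqrt_integral_sq (hX.sub hY).1] at key
  rw [integral_map measurable_fst.aemeasurable (by fun_prop),
    integral_map measurable_snd.aemeasurable (by fun_prop)]
  simpa only [Pi.sub_apply, sub_sub_sub_cancel_right] using key

lemma W2_le_of_coupling {lam nu : Measure ℝ} (ξ : Measure (ℝ × ℝ)) [IsProbabilityMeasure ξ]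
    (hfst : ξ.map Prod.fst = lam) (hsnd : ξ.map Prod.snd = nu) :
    W2 lam nu ≤ √(∫ q, (q.1 - q.2) ^ 2 ∂ξ) := by
  refine csInf_le ⟨0, ?_⟩ ⟨ξ, inferInstance, hfst, hsnd, Real.sqrt_eq_rpow _⟩
  rintro r ⟨ξ', -, -, -, rfl⟩
  exact Real.rpow_nonneg (integral_nonneg fun q => sq_nonneg _) _

lemma le_W2_of_forall_coupling {lam nu : Measure ℝ} [IsProbabilityMeasure lam]
    [IsProbabilityMeasure nu] {a : ℝ}
    (h : ∀ ξ : Measure (ℝ × ℝ), IsProbabilityMeasure ξ → ξ.map Prod.fst = lam →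
      ξ.map Prod.snd = nu → a ≤ √(∫ q, (q.1 - q.2) ^ 2 ∂ξ)) :
    a ≤ W2 lam nu := by
  refine le_csInf ⟨_, lam.prod nu, inferInstance, by simp, by simp, rfl⟩ ?_
  rintro r ⟨ξ, hξ, hfst, hsnd, rfl⟩
  rw [← Real.sqrt_eq_rpow]
  exact h ξ hξ hfst hsnd

lemma W2_map_le {Ω : Type*} [MeasurableSpace Ω] (ρ : Measure Ω) [IsProbabilityMeasure ρ]
    {f g : Ω → ℝ} (hf : Measurable f) (hg : Measurable g) :
    W2 (ρ.map f) (ρ.map g) ≤ √(∫ ω, (f ω - g ω) ^ 2 ∂ρ) := by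
  have hfg : Measurable fun ω => (f ω, g ω) := hf.prodMk hg
  have := Measure.isProbabilityMeasure_map (μ := ρ) hfg.aemeasurable
  refine (W2_le_of_coupling (ρ.map fun ω => (f ω, g ω))
    (by rw [Measure.map_map measurable_fst hfg]; rfl)
    (by rw [Measure.map_map measurable_snd hfg]; rfl)).trans_eq ?_
  rw [integral_map hfg.aemeasurable (by fun_prop)]

lemma abs_sqrt_sub_sqrt_le_W2 {lam nu : Measure ℝ} [IsProbabilityMeasure lam]
    [IsProbabilityMeasure nu] (hlam : MemLp id 2 lam) (hnu : MemLp id 2 nu) (c : ℝ) :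
    |√(∫ t, (t - c) ^ 2 ∂lam) - √(∫ t, (t - c) ^ 2 ∂nu)| ≤ W2 lam nu :=
  le_W2_of_forall_coupling fun _ _ hfst hsnd =>
    abs_sqrt_sub_sqrt_le_of_coupling hfst hsnd hlam hnu c

lemma integral_sub_sq_gaussianReal (m : ℝ) (v : NNReal) :
    ∫ x, (x - m) ^ 2 ∂gaussianReal m v = v := by
  simpa [integral_id_gaussianReal] using
    (variance_eq_integral (μ := gaussianReal m v) measurable_id.aemeasurable).symm.trans
      variance_id_gaussianReal

lemma gaussianReal_map_sqrt_mul_add (m : ℝ) (v : NNReal) :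
    (gaussianReal 0 1).map (fun z => √v * z + m) = gaussianReal m v := by
  have h := (gaussianReal_add_const
    (gaussianReal_const_mul (HasLaw.id (μ := gaussianReal 0 1)) √v) m).map_eq
  have hv : NNReal.mk (√v ^ 2) (sq_nonneg _) * 1 = v := NNReal.eq (by simp)
  simpa [hv] using h

lemma W2_gaussianReal_le (m : ℝ) (v₁ v₂ : NNReal) :
    W2 (gaussianReal m v₁) (gaussianReal m v₂) ≤ |√v₁ - √v₂| := by
  rw [← gaussianReal_map_sqrt_mul_add m v₁, ← gaussianReal_map_sqrt_mul_add m v₂]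
  refine (W2_map_le _ (by fun_prop) (by fun_prop)).trans_eq ?_
  have h : ∀ z : ℝ, (√v₁ * z + m - (√v₂ * z + m)) ^ 2 = (√v₁ - √v₂) ^ 2 * (z - 0) ^ 2 :=
    fun z => by ring
  simp_rw [h]
  rw [integral_const_mul, integral_sub_sq_gaussianReal, NNReal.coe_one, mul_one,
    Real.sqrt_sq_eq_abs]

lemma W2_gaussianReal (m : ℝ) (v₁ v₂ : NNReal) :
    W2 (gaussianReal m v₁) (gaussianReal m v₂) = |√v₁ - √v₂| := by
  refine le_antisymm (W2_gaussianReal_le m v₁ v₂) ?_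
  simpa only [integral_sub_sq_gaussianReal] using
    abs_sqrt_sub_sqrt_le_W2 (memLp_id_gaussianReal (μ := m) (v := v₁) 2)
      (memLp_id_gaussianReal (μ := m) (v := v₂) 2) m

theorem stmt5_general (m : ℝ) (v₁ v₂ : NNReal) (μfac γ A : ℝ) (n : ℕ)
    (hμ : μfac ∈ Set.Ioo (0 : ℝ) 1)
    (P Q : Measure ℝ) [IsProbabilityMeasure P] [IsProbabilityMeasure Q]
    (hPL2 : MemLp id 2 P) (hQL2 : MemLp id 2 Q)
    (θs : ℝ)
    (hPvar : ∫ t, (t - θs) ^ 2 ∂P = (1 - μfac ^ n) / (1 - μfac) * (2 * γ + γ ^ 2 * A))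
    (hQvar : ∫ t, (t - θs) ^ 2 ∂Q = (1 - μfac ^ n) / (1 - μfac) * (2 * γ)) :
    W2 (gaussianReal m v₁) (gaussianReal m v₂) = |Real.sqrt v₁ - Real.sqrt v₂| ∧
    ((1 - μfac ^ n) / (1 - μfac)) ^ ((1 : ℝ) / 2)
        * (Real.sqrt (2 * γ + γ ^ 2 * A) - Real.sqrt (2 * γ))
      ≤ W2 P Q := by
  refine ⟨W2_gaussianReal m v₁ v₂, ?_⟩
  set C := (1 - μfac ^ n) / (1 - μfac)
  have hC : 0 ≤ C :=
    div_nonneg (sub_nonneg.2 (pow_le_one₀ hμ.1.le hμ.2.le)) (sub_nonneg.2 hμ.2.le)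
  calc C ^ ((1 : ℝ) / 2) * (√(2 * γ + γ ^ 2 * A) - √(2 * γ))
      = √(C * (2 * γ + γ ^ 2 * A)) - √(C * (2 * γ)) := by
        rw [← Real.sqrt_eq_rpow, Real.sqrt_mul hC, Real.sqrt_mul hC, mul_sub]
    _ ≤ |√(∫ t, (t - θs) ^ 2 ∂P) - √(∫ t, (t - θs) ^ 2 ∂Q)| := by
        rw [hPvar, hQvar]
        exact le_abs_self _
    _ ≤ W2 P Q := abs_sqrt_sub_sqrt_le_W2 hPL2 hQL2 θs

/-- `W₂` between one-dimensional Gaussians with the same mean is `|√v₁ - √v₂|`; in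
particular the `n`-step SGLD and SGLDFP chains in 1-D Bayesian linear regression
(same mean `θ⋆`, variances `(1-μⁿ)/(1-μ)·(2γ+γ²A)` and `(1-μⁿ)/(1-μ)·2γ`) satisfy the
stated `W₂` lower bound. -/
theorem stmt5 (m : ℝ) (v₁ v₂ : NNReal) (μfac γ A : ℝ) (n : ℕ) (hn : 1 ≤ n)
    (hμ : μfac ∈ Set.Ioo (0 : ℝ) 1) (hγ : 0 < γ) (hA : 0 ≤ A)
    (P Q : Measure ℝ) [IsProbabilityMeasure P] [IsProbabilityMeasure Q]
    (hPL2 : MemLp id 2 P) (hQL2 : MemLp id 2 Q)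
    (θs : ℝ)
    (hPmean : ∫ t, t ∂P = θs) (hQmean : ∫ t, t ∂Q = θs)
    (hPvar : ∫ t, (t - θs) ^ 2 ∂P = (1 - μfac ^ n) / (1 - μfac) * (2 * γ + γ ^ 2 * A))
    (hQvar : ∫ t, (t - θs) ^ 2 ∂Q = (1 - μfac ^ n) / (1 - μfac) * (2 * γ)) :
    W2 (gaussianReal m v₁) (gaussianReal m v₂) = |Real.sqrt v₁ - Real.sqrt v₂| ∧
    ((1 - μfac ^ n) / (1 - μfac)) ^ ((1 : ℝ) / 2)
        * (Real.sqrt (2 * γ + γ ^ 2 * A) - Real.sqrt (2 * γ))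
      ≤ W2 P Q :=
  stmt5_general m v₁ v₂ μfac γ A n hμ P Q hPL2 hQL2 θs hPvar hQvar
end

section
/- Let A be a symmetric positive definite d×d real matrix with largest eigenvalue at most L, and let γ ∈ (0, 2/L). Then the linear operator H on d×d matrices defined by H(Q) = A Q + Q A - γ A Q A is symmetric positive definite with respect to the Hilbert–Schmidt inner product, hence invertible. -/
/-!
Put `B = 1 - (γ/2) A`, so that `H(Q) = A Q B + B Q A`. The bound `γ L < 2` makes `B` positive
definite, and under vectorization `H` becomes multiplication by `Bᵀ ⊗ A + Aᵀ ⊗ B`, a sum of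
Kronecker products of positive definite matrices, hence positive definite. Since
`Tr(Pᵀ Q) = vec P ⬝ vec Q`, symmetry, positivity and invertibility of `H` for the
Hilbert–Schmidt product are those of this matrix.
-/

open Matrix
open scoped Kronecker ComplexOrder

namespace Matrix

variable {m n : Type*} [Fintype m] [Fintype n]

section VecConjugate

variable {f : Matrix m n ℝ → Matrix m n ℝ} {K : Matrix (n × m) (n × m) ℝ}

theorem trace_transpose_mul_comm_of_vec_eq_mulVec (hf : ∀ Q, vec (f Q) = K *ᵥ vec Q)
    (hK : K.IsSymm) (P Q : Matrix m n ℝ) :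
    (Pᵀ * f Q).trace = ((f P)ᵀ * Q).trace := by
  rw [← vec_dotProduct_vec, ← vec_dotProduct_vec, hf, hf, dotProduct_mulVec, ← vecMul_transpose,
    hK.eq]

theorem trace_transpose_mul_pos_of_vec_eq_mulVec (hf : ∀ Q, vec (f Q) = K *ᵥ vec Q)
    (hK : K.PosDef) {Q : Matrix m n ℝ} (hQ : Q ≠ 0) : 0 < (Qᵀ * f Q).trace := by
  simpa [← vec_dotProduct_vec, hf] using hK.dotProduct_mulVec_pos (vec_eq_zero_iff.not.mpr hQ)

theorem bijective_of_vec_eq_mulVec [DecidableEq m] [DecidableEq n]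
    (hf : ∀ Q, vec (f Q) = K *ᵥ vec Q) (hK : IsUnit K) : Function.Bijective f := by
  have hvec : vec ∘ f = K.mulVec ∘ vec := funext hf
  rw [← Function.Bijective.of_comp_iff' vec_bijective, hvec]
  exact (Function.Bijective.of_comp_iff _ vec_bijective).mpr
    ⟨mulVec_injective_iff_isUnit.mpr hK, mulVec_surjective_iff_isUnit.mpr hK⟩

end VecConjugate

theorem vec_mul_mul_add_mul_mul {R : Type*} [CommSemiring R] (A B Q : Matrix n n R) :
    vec (A * Q * B + B * Q * A) = (Bᵀ ⊗ₖ A + Aᵀ ⊗ₖ B) *ᵥ vec Q := by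
  rw [add_mulVec, kronecker_mulVec_vec, kronecker_mulVec_vec, transpose_transpose,
    transpose_transpose, vec_add]

theorem PosDef.kronecker_add_kronecker {𝕜 : Type*} [RCLike 𝕜] {A B : Matrix n n 𝕜}
    (hA : A.PosDef) (hB : B.PosDef) :
    (Bᵀ ⊗ₖ A + Aᵀ ⊗ₖ B).PosDef :=
  (hB.transpose.kronecker hA).add (hA.transpose.kronecker hB)

theorem posDef_one_sub_smul [DecidableEq n] {A : Matrix n n ℝ} {L c : ℝ}
    (hA : A.IsHermitian)
    (hL : ∀ v : n → ℝ, v ⬝ᵥ (A *ᵥ v) ≤ L * (v ⬝ᵥ v)) (hc : 0 ≤ c) (hcL : c * L < 1) :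
    (1 - c • A).PosDef := by
  refine .of_dotProduct_mulVec_pos (isHermitian_one.sub (hA.smul (.all c))) fun v hv => ?_
  have hvv : 0 < v ⬝ᵥ v := by simpa using dotProduct_star_self_pos_iff.mpr hv
  have hAv := mul_le_mul_of_nonneg_left (hL v) hc
  rw [star_trivial, sub_mulVec, one_mulVec, smul_mulVec, dotProduct_sub, dotProduct_smul,
    smul_eq_mul]
  nlinarith

theorem mul_add_mul_sub_smul_eq [DecidableEq n] (A Q : Matrix n n ℝ) (γ : ℝ) :
    A * Q + Q * A - γ • (A * Q * A)
      = A * Q * (1 - (γ / 2) • A) + (1 - (γ / 2) • A) * Q * A := by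
  simp only [Matrix.mul_sub, Matrix.sub_mul, Matrix.mul_one, Matrix.one_mul, Matrix.mul_smul,
    Matrix.smul_mul, Matrix.mul_assoc]
  module

end Matrix

theorem stmt9_general {d : ℕ} (A : Matrix (Fin d) (Fin d) ℝ) (L γ : ℝ)
    (hA : A.PosDef)
    (hL : ∀ v : Fin d → ℝ, v ⬝ᵥ (A *ᵥ v) ≤ L * (v ⬝ᵥ v))
    (hγ : γ ∈ Set.Ioo (0 : ℝ) (2 / L)) :
    (∀ P Q : Matrix (Fin d) (Fin d) ℝ,
      (Pᵀ * (A * Q + Q * A - γ • (A * Q * A))).trace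
        = ((A * P + P * A - γ • (A * P * A))ᵀ * Q).trace) ∧
    (∀ Q : Matrix (Fin d) (Fin d) ℝ, Q ≠ 0 →
      0 < (Qᵀ * (A * Q + Q * A - γ • (A * Q * A))).trace) ∧
    Function.Bijective
      (fun Q : Matrix (Fin d) (Fin d) ℝ => A * Q + Q * A - γ • (A * Q * A)) := by
  obtain ⟨hγ0, hγ2⟩ := hγ
  have hL0 : 0 < L := (div_pos_iff_of_pos_left two_pos).mp (hγ0.trans hγ2)
  set B := 1 - (γ / 2) • A
  have hB : B.PosDef :=
    posDef_one_sub_smul hA.isHermitian hL (by positivity)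
      (by linarith [(lt_div_iff₀ hL0).mp hγ2])
  have hvec : ∀ Q, vec (A * Q + Q * A - γ • (A * Q * A)) = (Bᵀ ⊗ₖ A + Aᵀ ⊗ₖ B) *ᵥ vec Q :=
    fun Q => by rw [mul_add_mul_sub_smul_eq, vec_mul_mul_add_mul_mul]
  have hK := hA.kronecker_add_kronecker hB
  exact ⟨trace_transpose_mul_comm_of_vec_eq_mulVec hvec
      (isHermitian_iff_isSymm.mp hK.isHermitian),
    fun _ => trace_transpose_mul_pos_of_vec_eq_mulVec hvec hK,
    bijective_of_vec_eq_mulVec hvec hK.isUnit⟩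

/-- The Lyapunov-type operator `H(Q) = AQ + QA - γ AQA` is symmetric positive definite for
the Hilbert–Schmidt inner product (hence invertible) when `A` is symmetric positive
definite with largest eigenvalue at most `L` and `γ ∈ (0, 2/L)`. -/
theorem stmt9 {d : ℕ} (A : Matrix (Fin d) (Fin d) ℝ) (L γ : ℝ)
    (hA : A.PosDef) (hAsym : A.IsSymm)
    (hL : ∀ v : Fin d → ℝ, v ⬝ᵥ (A *ᵥ v) ≤ L * (v ⬝ᵥ v))
    (hγ : γ ∈ Set.Ioo (0 : ℝ) (2 / L)) :
    (∀ P Q : Matrix (Fin d) (Fin d) ℝ,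
      (Pᵀ * (A * Q + Q * A - γ • (A * Q * A))).trace
        = ((A * P + P * A - γ • (A * P * A))ᵀ * Q).trace) ∧
    (∀ Q : Matrix (Fin d) (Fin d) ℝ, Q ≠ 0 →
      0 < (Qᵀ * (A * Q + Q * A - γ • (A * Q * A))).trace) ∧
    Function.Bijective
      (fun Q : Matrix (Fin d) (Fin d) ℝ => A * Q + Q * A - γ • (A * Q * A)) :=
  stmt9_general A L γ hA hL hγ
end

section
/- Let A be a symmetric positive definite d×d matrix with largest eigenvalue at most L, let 𝓛 be a positive semidefinite operator on d×d matrices (w.r.t. the Hilbert–Schmidt inner product) satisfying 𝓛 ⪯ r² (A ⊗ A), i.e., Tr(Qᵀ𝓛(Q)) ≤ r² Tr(Qᵀ A Q A) for all Q, and let γ ∈ (0, 2/((1+r²)L)). Then the operator G(Q) = A Q + Q A - γ(A Q A + 𝓛(Q)) is positive definite, hence invertible. -/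
/-!
Write `S₁ = Tr(QᵀAQ)`, `S₂ = Tr(QᵀQA) = Tr(QAQᵀ)` and `T = Tr(QᵀAQA)`, so that
`Tr(Qᵀ G(Q)) = S₁ + S₂ - γ (T + Tr(Qᵀ 𝓛(Q)))`. Positive definiteness of `A` makes `S₁, S₂ > 0`
for `Q ≠ 0`. Since `A ⪯ L·I` and both `QᵀAQ` and `QAQᵀ` are positive semidefinite, `T ≤ L S₁`
and `T ≤ L S₂`, while `𝓛 ⪯ r² (A ⊗ A)` gives `Tr(Qᵀ 𝓛(Q)) ≤ r² T`. Hence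
`γ (T + Tr(Qᵀ 𝓛(Q))) ≤ γ (1 + r²) L (S₁ + S₂) / 2 < S₁ + S₂`. A linear endomorphism of a
finite-dimensional space with positive definite quadratic form is injective, hence bijective.
-/

open scoped ComplexOrder MatrixOrder

namespace Matrix

variable {𝕜 n m : Type*} [RCLike 𝕜] [Fintype n] [Fintype m]

lemma PosSemidef.trace_mul_nonneg [DecidableEq n] {M N : Matrix n n 𝕜}
    (hM : M.PosSemidef) (hN : N.PosSemidef) : 0 ≤ (M * N).trace := by
  set S := CFC.sqrt N
  have hS : Sᴴ = S := (nonneg_iff_posSemidef.mp (CFC.sqrt_nonneg N)).isHermitian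
  have hSS : S * S = N := CFC.sqrt_mul_sqrt_self N hN.nonneg
  calc (0 : 𝕜) ≤ (S * M * Sᴴ).trace := (hM.mul_mul_conjTranspose_same S).trace_nonneg
    _ = (M * N).trace := by
      rw [hS, trace_mul_cycle, ← hSS, ← Matrix.mul_assoc, trace_mul_comm, Matrix.mul_assoc]

lemma PosSemidef.trace_mul_le_trace_mul [DecidableEq n] {M A B : Matrix n n 𝕜}
    (hM : M.PosSemidef) (hAB : A ≤ B) : (M * A).trace ≤ (M * B).trace := by
  have := hM.trace_mul_nonneg (le_iff.mp hAB)
  rwa [Matrix.mul_sub, trace_sub, sub_nonneg] at this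

lemma PosDef.trace_conjTranspose_mul_mul_pos {A : Matrix n n 𝕜} (hA : A.PosDef)
    {B : Matrix n m 𝕜} (hB : B ≠ 0) : 0 < (Bᴴ * A * B).trace := by
  classical
  have hpsd := hA.posSemidef.conjTranspose_mul_mul_same B
  refine hpsd.trace_nonneg.lt_of_ne' fun h ↦ hB ?_
  rw [hpsd.trace_eq_zero_iff] at h
  refine ext_of_mulVec_single fun i ↦ ?_
  rw [zero_mulVec]
  by_contra hne
  have := hA.dotProduct_mulVec_pos hne
  rw [star_mulVec, ← dotProduct_mulVec, mulVec_mulVec, mulVec_mulVec, h] at this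
  simp at this

lemma le_smul_one_of_dotProduct_mulVec_le [DecidableEq n] {A : Matrix n n ℝ}
    (hA : A.IsHermitian) {L : ℝ} (hL : ∀ v : n → ℝ, v ⬝ᵥ (A *ᵥ v) ≤ L * (v ⬝ᵥ v)) :
    A ≤ L • 1 := by
  refine PosSemidef.of_dotProduct_mulVec_nonneg (by simpa [IsHermitian] using hA) fun v ↦ ?_
  simpa [sub_mulVec, smul_mulVec, dotProduct_sub] using hL v

end Matrix

open Matrix

section PerturbedLyapunov

variable {R n : Type*} [CommRing R] [Fintype n]

def perturbedLyapunov (A : Matrix n n R) (γ : R) (𝓛 : Matrix n n R →ₗ[R] Matrix n n R) :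
    Matrix n n R →ₗ[R] Matrix n n R :=
  LinearMap.mulLeft R A + LinearMap.mulRight R A -
    γ • (LinearMap.mulLeft R A ∘ₗ LinearMap.mulRight R A + 𝓛)

lemma perturbedLyapunov_apply (A : Matrix n n R) (γ : R) (𝓛 : Matrix n n R →ₗ[R] Matrix n n R)
    (Q : Matrix n n R) :
    perturbedLyapunov A γ 𝓛 Q = A * Q + Q * A - γ • (A * Q * A + 𝓛 Q) := by
  simp [perturbedLyapunov, Matrix.mul_assoc]

end PerturbedLyapunov

theorem trace_transpose_mul_perturbedLyapunov_pos {n : Type*} [Fintype n] [DecidableEq n]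
    {A : Matrix n n ℝ} (hA : A.PosDef) {L r γ : ℝ} (hAL : A ≤ L • 1)
    (𝓛 : Matrix n n ℝ →ₗ[ℝ] Matrix n n ℝ)
    (h𝓛 : ∀ Q : Matrix n n ℝ, (Qᵀ * 𝓛 Q).trace ≤ r ^ 2 * (Qᵀ * (A * Q * A)).trace)
    (hγ : 0 < γ) (hγL : γ * ((1 + r ^ 2) * L) < 2) {Q : Matrix n n ℝ} (hQ : Q ≠ 0) :
    0 < (Qᵀ * perturbedLyapunov A γ 𝓛 Q).trace := by
  have hS₁ : 0 < (Qᵀ * (A * Q)).trace := by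
    simpa [Matrix.mul_assoc] using hA.trace_conjTranspose_mul_mul_pos hQ
  have hS₂ : 0 < (Qᵀ * (Q * A)).trace := by
    rw [trace_mul_comm]
    simpa using hA.trace_conjTranspose_mul_mul_pos (mt transpose_eq_zero.mp hQ)
  have hT₁ : (Qᵀ * (A * Q * A)).trace ≤ L * (Qᵀ * (A * Q)).trace := by
    simpa [Matrix.mul_assoc] using
      (hA.posSemidef.conjTranspose_mul_mul_same Q).trace_mul_le_trace_mul hAL
  have hT₂ : (Qᵀ * (A * Q * A)).trace ≤ L * (Qᵀ * (Q * A)).trace := by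
    rw [trace_mul_comm Qᵀ (Q * A), trace_mul_comm Qᵀ,
      show A * Q * A * Qᵀ = A * (Q * A * Qᵀ) by simp only [Matrix.mul_assoc], trace_mul_comm A]
    simpa using (hA.posSemidef.mul_mul_conjTranspose_same Q).trace_mul_le_trace_mul hAL
  rw [perturbedLyapunov_apply]
  simp only [Matrix.mul_add, Matrix.mul_sub, Matrix.mul_smul, trace_add, trace_sub, trace_smul,
    smul_eq_mul, sub_pos]
  calc γ * ((Qᵀ * (A * Q * A)).trace + (Qᵀ * 𝓛 Q).trace)
      ≤ γ * (1 + r ^ 2) * (Qᵀ * (A * Q * A)).trace := by nlinarith [h𝓛 Q]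
    _ ≤ γ * (1 + r ^ 2) * (L * ((Qᵀ * (A * Q)).trace + (Qᵀ * (Q * A)).trace) / 2) := by
      gcongr; linarith
    _ < (Qᵀ * (A * Q)).trace + (Qᵀ * (Q * A)).trace := by nlinarith

theorem stmt10_general {d : ℕ} (A : Matrix (Fin d) (Fin d) ℝ) (L r γ : ℝ)
    (hA : A.PosDef)
    (hL : ∀ v : Fin d → ℝ, v ⬝ᵥ (A *ᵥ v) ≤ L * (v ⬝ᵥ v))
    (Lop : Matrix (Fin d) (Fin d) ℝ →ₗ[ℝ] Matrix (Fin d) (Fin d) ℝ)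
    (hLdom : ∀ Q : Matrix (Fin d) (Fin d) ℝ,
      (Qᵀ * Lop Q).trace ≤ r ^ 2 * (Qᵀ * (A * Q * A)).trace)
    (hγ : γ ∈ Set.Ioo (0 : ℝ) (2 / ((1 + r ^ 2) * L))) :
    (∀ Q : Matrix (Fin d) (Fin d) ℝ, Q ≠ 0 →
      0 < (Qᵀ * (A * Q + Q * A - γ • (A * Q * A + Lop Q))).trace) ∧
    Function.Bijective
      (fun Q : Matrix (Fin d) (Fin d) ℝ => A * Q + Q * A - γ • (A * Q * A + Lop Q)) := by
  obtain ⟨hγ, hγlt⟩ := hγ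
  -- `0 < γ < 2 / x` forces `0 < x`, so the bound on `γ` is not a junk-value division.
  have hγL : γ * ((1 + r ^ 2) * L) < 2 :=
    (lt_div_iff₀ ((div_pos_iff_of_pos_left two_pos).mp (hγ.trans hγlt))).mp hγlt
  have hpos := fun Q (hQ : Q ≠ 0) ↦ trace_transpose_mul_perturbedLyapunov_pos hA
    (le_smul_one_of_dotProduct_mulVec_le hA.isHermitian hL) Lop hLdom hγ hγL hQ
  have hinj : Function.Injective (perturbedLyapunov A γ Lop) :=
    (injective_iff_map_eq_zero _).2 fun Q hQ ↦ by_contra fun hQ₀ ↦ by simpa [hQ] using hpos Q hQ₀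
  simp only [perturbedLyapunov_apply] at hpos
  exact ⟨hpos, funext (perturbedLyapunov_apply A γ Lop) ▸
    ⟨hinj, LinearMap.injective_iff_surjective.mp hinj⟩⟩

/-- The perturbed Lyapunov operator `G(Q) = AQ + QA - γ(AQA + 𝓛(Q))` is positive definite
(hence invertible) when `A` is symmetric positive definite with largest eigenvalue at most
`L`, `𝓛` is positive semidefinite with `𝓛 ⪯ r² (A ⊗ A)` and `γ ∈ (0, 2/((1+r²)L))`. -/
theorem stmt10 {d : ℕ} (A : Matrix (Fin d) (Fin d) ℝ) (L r γ : ℝ)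
    (hA : A.PosDef) (hAsym : A.IsSymm)
    (hL : ∀ v : Fin d → ℝ, v ⬝ᵥ (A *ᵥ v) ≤ L * (v ⬝ᵥ v))
    (Lop : Matrix (Fin d) (Fin d) ℝ →ₗ[ℝ] Matrix (Fin d) (Fin d) ℝ)
    (hLpsd : ∀ Q : Matrix (Fin d) (Fin d) ℝ, 0 ≤ (Qᵀ * Lop Q).trace)
    (hLdom : ∀ Q : Matrix (Fin d) (Fin d) ℝ,
      (Qᵀ * Lop Q).trace ≤ r ^ 2 * (Qᵀ * (A * Q * A)).trace)
    (hγ : γ ∈ Set.Ioo (0 : ℝ) (2 / ((1 + r ^ 2) * L))) :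
    (∀ Q : Matrix (Fin d) (Fin d) ℝ, Q ≠ 0 →
      0 < (Qᵀ * (A * Q + Q * A - γ • (A * Q * A + Lop Q))).trace) ∧
    Function.Bijective
      (fun Q : Matrix (Fin d) (Fin d) ℝ => A * Q + Q * A - γ • (A * Q * A + Lop Q)) :=
  stmt10_general A L r γ hA hL Lop hLdom hγ
end

section
/- Let C be the stationary covariance of the LMC chain for a Gaussian target with symmetric positive definite precision matrix Σ (smallest eigenvalue m, largest eigenvalue L) and step size γ ∈ (0, 2/L), i.e., C solves ΣC + CΣ - γΣCΣ = 2Id. Then Σ^{-1} ⪯ C ⪯ (1 - γL/2)^{-1} Σ^{-1}; in particular, setting γ = η/N with m proportional to N, Tr(C) = Θ(d/N) as N → ∞. -/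
/-! In an orthonormal eigenbasis of `Σ`, with eigenvalues `sᵢ ∈ [m, L]`, the equation
`ΣC + CΣ - γΣCΣ = 2` reads `(sᵢ + sⱼ - γ sᵢ sⱼ) Cᵢⱼ = 2 δᵢⱼ`. Since `γ sᵢ < 2` the coefficient is
positive, so `C` is diagonal in the same basis, with eigenvalues `sᵢ⁻¹ (1 - γ sᵢ / 2)⁻¹`. These lie
between `sᵢ⁻¹` and `(1 - γL/2)⁻¹ sᵢ⁻¹`, which gives both Loewner bounds, and summing gives the
trace bounds. -/

open Matrix Unitary

namespace Matrix

variable {n : Type*} [Fintype n] [DecidableEq n]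

section Spectrum

variable {A : Matrix n n ℝ}

theorem IsHermitian.eigenvalues_eq_dotProduct_mulVec (hA : A.IsHermitian) (i : n) :
    hA.eigenvalues i = ⇑(hA.eigenvectorBasis i) ⬝ᵥ (A *ᵥ ⇑(hA.eigenvectorBasis i)) := by
  simpa using hA.eigenvalues_eq i

theorem IsHermitian.dotProduct_self_eigenvectorBasis (hA : A.IsHermitian) (i : n) :
    ⇑(hA.eigenvectorBasis i) ⬝ᵥ ⇑(hA.eigenvectorBasis i) = 1 := by
  have h := real_inner_self_eq_norm_sq (hA.eigenvectorBasis i)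
  rw [hA.eigenvectorBasis.orthonormal.1 i, EuclideanSpace.inner_eq_star_dotProduct] at h
  simpa using h

theorem IsHermitian.le_eigenvalues_of_forall_le_dotProduct_mulVec (hA : A.IsHermitian) {m : ℝ}
    (h : ∀ v : n → ℝ, m * (v ⬝ᵥ v) ≤ v ⬝ᵥ (A *ᵥ v)) (i : n) : m ≤ hA.eigenvalues i := by
  simpa [hA.dotProduct_self_eigenvectorBasis, ← hA.eigenvalues_eq_dotProduct_mulVec] using
    h (hA.eigenvectorBasis i)

theorem IsHermitian.eigenvalues_le_of_forall_dotProduct_mulVec_le (hA : A.IsHermitian) {L : ℝ}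
    (h : ∀ v : n → ℝ, v ⬝ᵥ (A *ᵥ v) ≤ L * (v ⬝ᵥ v)) (i : n) : hA.eigenvalues i ≤ L := by
  simpa [hA.dotProduct_self_eigenvectorBasis, ← hA.eigenvalues_eq_dotProduct_mulVec] using
    h (hA.eigenvectorBasis i)

theorem IsHermitian.eq_conjStarAlgAut_diagonal_eigenvalues (hA : A.IsHermitian) :
    A = conjStarAlgAut ℝ _ hA.eigenvectorUnitary (diagonal hA.eigenvalues) := by
  simpa using hA.spectral_theorem

end Spectrum

section Conj

open scoped ComplexOrder

variable {𝕜 : Type*} [RCLike 𝕜] (u : unitaryGroup n 𝕜)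

theorem trace_conjStarAlgAut (X : Matrix n n 𝕜) :
    (conjStarAlgAut 𝕜 _ u X).trace = X.trace := by
  rw [conjStarAlgAut_apply, trace_mul_cycle, coe_star_mul_self, one_mul]

theorem posSemidef_conjStarAlgAut_iff (X : Matrix n n 𝕜) :
    (conjStarAlgAut 𝕜 _ u X).PosSemidef ↔ X.PosSemidef :=
  isUnit_coe.posSemidef_star_right_conjugate_iff

theorem inv_conjStarAlgAut_diagonal {s : n → 𝕜} (hs : ∀ i, s i ≠ 0) :
    (conjStarAlgAut 𝕜 _ u (diagonal s))⁻¹ = conjStarAlgAut 𝕜 _ u (diagonal s⁻¹) := by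
  refine inv_eq_right_inv ?_
  rw [← map_mul, diagonal_mul_diagonal]
  simp [mul_inv_cancel₀ (hs _)]

end Conj

section Lyapunov

theorem lyapunov_diagonal_apply {R : Type*} [CommRing R] (s : n → R) (γ : R) (X : Matrix n n R)
    (i j : n) :
    (diagonal s * X + X * diagonal s - γ • (diagonal s * X * diagonal s)) i j =
      (s i + s j - γ * s i * s j) * X i j := by
  simp only [sub_apply, add_apply, smul_apply, diagonal_mul, mul_diagonal, smul_eq_mul]
  ring

variable {K : Type*} [Field K] [CharZero K]

def stationaryVariance (γ s : K) : K := s⁻¹ * (1 - γ * s / 2)⁻¹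

theorem eq_diagonal_of_lyapunov_diagonal {s : n → K} {γ : K}
    (hres : ∀ i j, s i + s j - γ * s i * s j ≠ 0) {X : Matrix n n K}
    (h : diagonal s * X + X * diagonal s - γ • (diagonal s * X * diagonal s) = (2 : K) • 1) :
    X = diagonal fun i => stationaryVariance γ (s i) := by
  ext i j
  have hij := congrFun (congrFun h i) j
  rw [lyapunov_diagonal_apply] at hij
  rcases eq_or_ne i j with rfl | hne
  · have hfac : s i + s i - γ * s i * s i = 2 * s i * (1 - γ * s i / 2) := by ring
    have hs : s i ≠ 0 ∧ 1 - γ * s i / 2 ≠ 0 := by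
      simpa [hfac, not_or] using hres i i
    simp only [smul_apply, one_apply_eq, smul_eq_mul, mul_one] at hij
    rw [diagonal_apply_eq, stationaryVariance, ← mul_inv]
    refine eq_inv_of_mul_eq_one_left ?_
    linear_combination hij / 2
  · simp only [smul_apply, one_apply_ne hne, smul_zero] at hij
    rw [diagonal_apply_ne _ hne]
    exact (mul_eq_zero.mp hij).resolve_left (hres i j)

theorem IsHermitian.eq_conjStarAlgAut_of_lyapunov {A C : Matrix n n ℝ} (hA : A.IsHermitian)
    {γ : ℝ} (hres : ∀ i j, hA.eigenvalues i + hA.eigenvalues j -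
      γ * hA.eigenvalues i * hA.eigenvalues j ≠ 0)
    (h : A * C + C * A - γ • (A * C * A) = (2 : ℝ) • 1) :
    C = conjStarAlgAut ℝ _ hA.eigenvectorUnitary
      (diagonal fun i => stationaryVariance γ (hA.eigenvalues i)) := by
  have hA' := hA.eq_conjStarAlgAut_diagonal_eigenvalues
  set φ := conjStarAlgAut ℝ _ hA.eigenvectorUnitary
  rw [← φ.apply_symm_apply C, ← eq_diagonal_of_lyapunov_diagonal hres]
  rw [hA'] at h
  simpa only [map_sub, map_add, map_mul, map_smul, map_one, φ.symm_apply_apply] using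
    congrArg φ.symm h

end Lyapunov

end Matrix

section StationaryVariance

variable {γ s : ℝ}

theorem add_sub_mul_mul_pos {t : ℝ} (hs : 0 < s) (ht : 0 < t) (hγs : γ * s < 2)
    (hγt : γ * t < 2) : 0 < s + t - γ * s * t := by
  nlinarith [mul_pos hs (sub_pos.2 hγt), mul_pos ht (sub_pos.2 hγs)]

theorem inv_le_stationaryVariance (hγ : 0 ≤ γ) (hs : 0 < s) (hγs : γ * s < 2) :
    s⁻¹ ≤ stationaryVariance γ s := by
  refine le_mul_of_one_le_right (inv_nonneg.2 hs.le) (one_le_inv₀ ?_ |>.2 ?_)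
  · linarith
  · nlinarith

theorem stationaryVariance_le {L : ℝ} (hγ : 0 ≤ γ) (hs : 0 < s) (hsL : s ≤ L) (hγL : γ * L < 2) :
    stationaryVariance γ s ≤ (1 - γ * L / 2)⁻¹ * s⁻¹ := by
  rw [stationaryVariance, mul_comm]
  gcongr
  · linarith

end StationaryVariance

theorem stmt12_general {d : ℕ} (Sig C : Matrix (Fin d) (Fin d) ℝ) (m L γ : ℝ)
    (hSig : Sig.PosDef)
    (hm : 0 < m)
    (hlow : ∀ v : Fin d → ℝ, m * (v ⬝ᵥ v) ≤ v ⬝ᵥ (Sig *ᵥ v))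
    (hup : ∀ v : Fin d → ℝ, v ⬝ᵥ (Sig *ᵥ v) ≤ L * (v ⬝ᵥ v))
    (hγ : γ ∈ Set.Ioo (0 : ℝ) (2 / L))
    (heq : Sig * C + C * Sig - γ • (Sig * C * Sig) = (2 : ℝ) • 1) :
    (C - Sig⁻¹).PosSemidef ∧
    ((1 - γ * L / 2)⁻¹ • Sig⁻¹ - C).PosSemidef ∧
    (d : ℝ) / L ≤ C.trace ∧ C.trace ≤ (1 - γ * L / 2)⁻¹ * (d : ℝ) / m := by
  obtain ⟨hγ0, hγL⟩ := hγ
  have hL : 0 < L := (div_pos_iff_of_pos_left two_pos).1 (hγ0.trans hγL)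
  replace hγL : γ * L < 2 := (lt_div_iff₀ hL).1 hγL
  have hA := hSig.isHermitian
  have hms := hA.le_eigenvalues_of_forall_le_dotProduct_mulVec hlow
  have hsL := hA.eigenvalues_le_of_forall_dotProduct_mulVec_le hup
  have hs i : 0 < hA.eigenvalues i := hm.trans_le (hms i)
  have hγs i : γ * hA.eigenvalues i < 2 :=
    (mul_le_mul_of_nonneg_left (hsL i) hγ0.le).trans_lt hγL
  have hC := hA.eq_conjStarAlgAut_of_lyapunov
    (fun i j => (add_sub_mul_mul_pos (hs i) (hs j) (hγs i) (hγs j)).ne') heq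
  have hSinv : Sig⁻¹ = conjStarAlgAut ℝ _ hA.eigenvectorUnitary (diagonal hA.eigenvalues⁻¹) := by
    rw [← inv_conjStarAlgAut_diagonal _ fun i => (hs i).ne',
      ← hA.eq_conjStarAlgAut_diagonal_eigenvalues]
  have htr : C.trace = ∑ i, stationaryVariance γ (hA.eigenvalues i) := by
    rw [hC, trace_conjStarAlgAut, trace_diagonal]
  refine ⟨?_, ?_, ?_, ?_⟩
  · rw [hC, hSinv, ← map_sub, diagonal_sub, posSemidef_conjStarAlgAut_iff, posSemidef_diagonal_iff]
    exact fun i => sub_nonneg.2 (inv_le_stationaryVariance hγ0.le (hs i) (hγs i))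
  · rw [hC, hSinv, ← map_smul, ← map_sub, ← diagonal_smul, diagonal_sub,
      posSemidef_conjStarAlgAut_iff, posSemidef_diagonal_iff]
    exact fun i => sub_nonneg.2 (stationaryVariance_le hγ0.le (hs i) (hsL i) hγL)
  · calc (d : ℝ) / L = ∑ _i : Fin d, L⁻¹ := by simp [div_eq_mul_inv]
      _ ≤ C.trace := htr ▸ Finset.sum_le_sum fun i _ =>
        (inv_anti₀ (hs i) (hsL i)).trans (inv_le_stationaryVariance hγ0.le (hs i) (hγs i))
  · calc C.trace ≤ ∑ _i : Fin d, (1 - γ * L / 2)⁻¹ * m⁻¹ := htr ▸ Finset.sum_le_sum fun i _ =>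
          (stationaryVariance_le hγ0.le (hs i) (hsL i) hγL).trans
            (mul_le_mul_of_nonneg_left (inv_anti₀ hm (hms i)) (inv_nonneg.2 (by linarith)))
      _ = (1 - γ * L / 2)⁻¹ * (d : ℝ) / m := by simp [div_eq_mul_inv]; ring

/-- The stationary covariance `C` of LMC for a Gaussian target with precision `Σ`
(eigenvalues in `[m, L]`) and step size `γ ∈ (0, 2/L)` satisfies
`Σ⁻¹ ⪯ C ⪯ (1 - γL/2)⁻¹ Σ⁻¹`; in particular `d/L ≤ Tr(C) ≤ (1 - γL/2)⁻¹ d/m`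
(so that `Tr C = Θ(d/N)` when `γ = η/N` and `m, L` are proportional to `N`). -/
theorem stmt12 {d : ℕ} (Sig C : Matrix (Fin d) (Fin d) ℝ) (m L γ : ℝ)
    (hSig : Sig.PosDef) (hsym : Sig.IsSymm) (hCsym : C.IsSymm)
    (hm : 0 < m)
    (hlow : ∀ v : Fin d → ℝ, m * (v ⬝ᵥ v) ≤ v ⬝ᵥ (Sig *ᵥ v))
    (hup : ∀ v : Fin d → ℝ, v ⬝ᵥ (Sig *ᵥ v) ≤ L * (v ⬝ᵥ v))
    (hγ : γ ∈ Set.Ioo (0 : ℝ) (2 / L))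
    (heq : Sig * C + C * Sig - γ • (Sig * C * Sig) = (2 : ℝ) • 1) :
    (C - Sig⁻¹).PosSemidef ∧
    ((1 - γ * L / 2)⁻¹ • Sig⁻¹ - C).PosSemidef ∧
    (d : ℝ) / L ≤ C.trace ∧ C.trace ≤ (1 - γ * L / 2)⁻¹ * (d : ℝ) / m :=
  stmt12_general Sig C m L γ hSig hm hlow hup hγ heq
end

section
/- Consider the stationary covariance matrices of SGLD and SGLDFP for Bayesian linear regression: C_SGLD = G^{-1}(2Id + γ(N/p)M) and C_FP = G^{-1}(2Id), where G(Q) = ΣQ + QΣ - γ(ΣQΣ + T(Q)) is positive definite, T is the positive semidefinite multiplicative-noise operator with T ⪯ r²(Σ⊗Σ), and M = Σ_{i=1}^N ((x_iᵀθ⋆ - y_i)x_i/σ_y² + θ⋆/σ_p²)^{⊗2} ⪰ 0. Then C_SGLD ⪰ C_FP (as symmetric matrices), with Tr(C_SGLD) - Tr(C_FP) ≥ 0 and equality iff M = 0. -/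
/-!
`D = C_SGLD - C_FP` solves `G D = γ (N/p) M` with `M ⪰ 0`, so everything reduces to `G⁻¹`
preserving the PSD cone. For the pairing `⟨P, Q⟩ = tr (Pᵀ Q)`, `G` is coercive: the Lyapunov
part contributes `tr (QᵀΣQ) + tr (QᵀQΣ) ≥ (2 / L) ⟨Q, ΣQΣ⟩`, which beats
`γ ⟨Q, ΣQΣ + T Q⟩ ≤ γ (1 + r²) ⟨Q, ΣQΣ⟩` as soon as `γ (1 + r²) L < 2`. Coercivity makes `G`
injective, hence `D` symmetric; write `D = D⁺ - D⁻`. As `D⁻ D⁺ = 0`, the Lyapunov part of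
`⟨D⁻, G D⁺⟩` vanishes and the rest is `-γ` times traces of products of PSD matrices, so
`0 ≤ ⟨D⁻, G D⟩ ≤ -⟨D⁻, G D⁻⟩`, which forces `D⁻ = 0`. A PSD matrix of trace zero vanishes, and
`M = 0` iff `D = 0` by injectivity.
-/

open Matrix

section PosSemidef

variable {n 𝕜 : Type*} [Fintype n] [DecidableEq n] [RCLike 𝕜]

open scoped ComplexOrder

open scoped MatrixOrder in
theorem Matrix.PosSemidef.trace_mul_nonneg_s19 {A B : Matrix n n 𝕜} (hA : A.PosSemidef)
    (hB : B.PosSemidef) : 0 ≤ (A * B).trace := by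
  obtain ⟨R, rfl⟩ := CStarAlgebra.nonneg_iff_eq_star_mul_self.mp hB.nonneg
  rw [← Matrix.mul_assoc, trace_mul_cycle, star_eq_conjTranspose]
  exact (hA.mul_mul_conjTranspose_same R).trace_nonneg

open scoped MatrixOrder in
theorem Matrix.IsHermitian.exists_posSemidef_sub {D : Matrix n n 𝕜} (hD : D.IsHermitian) :
    ∃ P N : Matrix n n 𝕜, P.PosSemidef ∧ N.PosSemidef ∧ N * P = 0 ∧ D = P - N :=
  ⟨D⁺, D⁻, (CFC.posPart_nonneg D).posSemidef, (CFC.negPart_nonneg D).posSemidef,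
    CFC.negPart_mul_posPart D, (CFC.posPart_sub_negPart D hD).symm⟩

end PosSemidef

variable {n : Type*} [Fintype n]

section Operators

variable {ι : Type*} [Fintype ι]

def noiseOp (c : ℝ) (B : ι → Matrix n n ℝ) : Matrix n n ℝ →ₗ[ℝ] Matrix n n ℝ where
  toFun Q := c • ∑ i, B i * Q * B i
  map_add' P Q := by
    simp only [Matrix.mul_add, Matrix.add_mul, Finset.sum_add_distrib, smul_add]
  map_smul' a Q := by
    simp only [Matrix.mul_smul, Matrix.smul_mul, ← Finset.smul_sum, RingHom.id_apply]
    exact smul_comm c a _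

theorem noiseOp_transpose {c : ℝ} {B : ι → Matrix n n ℝ} (hB : ∀ i, (B i).IsSymm)
    (Q : Matrix n n ℝ) : (noiseOp c B Q)ᵀ = noiseOp c B Qᵀ := by
  simp only [noiseOp, LinearMap.coe_mk, AddHom.coe_mk, transpose_smul, transpose_sum,
    transpose_mul, fun i => (hB i).eq, Matrix.mul_assoc]

theorem noiseOp_posSemidef {c : ℝ} (hc : 0 ≤ c) {B : ι → Matrix n n ℝ} (hB : ∀ i, (B i).IsSymm)
    {Q : Matrix n n ℝ} (hQ : Q.PosSemidef) : (noiseOp c B Q).PosSemidef := by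
  refine .smul (posSemidef_sum _ fun i _ => ?_) hc
  simpa [conjTranspose_eq_transpose_of_trivial, (hB i).eq] using
    hQ.conjTranspose_mul_mul_same (B i)

/-- The paper's `G`; its `T` is `noiseOp (N / p) B`. -/
def stationaryCovOp (γ : ℝ) (S : Matrix n n ℝ) (T : Matrix n n ℝ →ₗ[ℝ] Matrix n n ℝ) :
    Matrix n n ℝ →ₗ[ℝ] Matrix n n ℝ where
  toFun Q := S * Q + Q * S - γ • (S * Q * S + T Q)
  map_add' P Q := by
    simp only [Matrix.mul_add, Matrix.add_mul, map_add, smul_add]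
    abel
  map_smul' a Q := by
    simp only [Matrix.mul_smul, Matrix.smul_mul, map_smul, RingHom.id_apply, smul_add, smul_sub,
      smul_comm γ a]

theorem stationaryCovOp_transpose {γ : ℝ} {S : Matrix n n ℝ}
    {T : Matrix n n ℝ →ₗ[ℝ] Matrix n n ℝ} (hS : S.IsSymm) (hT : ∀ Q, (T Q)ᵀ = T Qᵀ)
    (Q : Matrix n n ℝ) : (stationaryCovOp γ S T Q)ᵀ = stationaryCovOp γ S T Qᵀ := by
  simp only [stationaryCovOp, LinearMap.coe_mk, AddHom.coe_mk, transpose_sub, transpose_add,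
    transpose_smul, transpose_mul, hS.eq, hT, Matrix.mul_assoc]
  abel

end Operators

variable [DecidableEq n]

theorem Matrix.posSemidef_smul_one_sub_of_dotProduct_mulVec_le {A : Matrix n n ℝ}
    (hA : A.IsHermitian) {L : ℝ} (hL : ∀ v, v ⬝ᵥ (A *ᵥ v) ≤ L * (v ⬝ᵥ v)) :
    (L • 1 - A).PosSemidef := by
  refine .of_dotProduct_mulVec_nonneg ((isHermitian_one.smul (.all L)).sub hA) fun v => ?_
  simpa [sub_mulVec, smul_mulVec, dotProduct_sub] using hL v

open scoped MatrixOrder in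
theorem Matrix.PosDef.trace_transpose_mul_mul_pos {A : Matrix n n ℝ} (hA : A.PosDef)
    {Q : Matrix n n ℝ} (hQ : Q ≠ 0) : 0 < (Qᵀ * (A * Q)).trace := by
  obtain ⟨R, rfl⟩ := CStarAlgebra.nonneg_iff_eq_star_mul_self.mp hA.posSemidef.nonneg
  have htr : (Qᵀ * (star R * R * Q)).trace = ((R * Q)ᴴ * (R * Q)).trace := by
    simp only [conjTranspose_eq_transpose_of_trivial, star_eq_conjTranspose, transpose_mul,
      Matrix.mul_assoc]
  rw [htr]
  refine (posSemidef_conjTranspose_mul_self _).trace_nonneg.lt_of_ne' fun h => hQ ?_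
  have hRQ : R * Q = 0 := trace_conjTranspose_mul_self_eq_zero_iff.mp h
  refine hA.isUnit.mul_left_cancel ?_
  rw [Matrix.mul_assoc, hRQ, Matrix.mul_zero, Matrix.mul_zero]

theorem Matrix.trace_transpose_mul_mul_mul_le_left {A : Matrix n n ℝ} (hA : A.PosSemidef)
    {L : ℝ} (hL : (L • 1 - A).PosSemidef) (Q : Matrix n n ℝ) :
    (Qᵀ * (A * Q * A)).trace ≤ L * (Qᵀ * (A * Q)).trace := by
  have h := (hA.conjTranspose_mul_mul_same Q).trace_mul_nonneg_s19 hL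
  simp only [conjTranspose_eq_transpose_of_trivial, Matrix.mul_sub, Matrix.mul_smul,
    Matrix.mul_one, trace_sub, trace_smul, smul_eq_mul, Matrix.mul_assoc] at h ⊢
  linarith

theorem Matrix.trace_transpose_mul_mul_mul_le_right {A : Matrix n n ℝ} (hA : A.PosSemidef)
    {L : ℝ} (hL : (L • 1 - A).PosSemidef) (Q : Matrix n n ℝ) :
    (Qᵀ * (A * Q * A)).trace ≤ L * (Qᵀ * (Q * A)).trace := by
  have h := (hL.conjTranspose_mul_mul_same Q).trace_mul_nonneg_s19 hA
  simp only [conjTranspose_eq_transpose_of_trivial, Matrix.mul_sub, Matrix.sub_mul,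
    Matrix.mul_smul, Matrix.smul_mul, Matrix.mul_one, trace_sub, trace_smul, smul_eq_mul,
    Matrix.mul_assoc] at h ⊢
  linarith

section Coercive

variable (G : Matrix n n ℝ →ₗ[ℝ] Matrix n n ℝ)

theorem eq_zero_of_coercive (hG : ∀ Q ≠ 0, 0 < (Qᵀ * G Q).trace) {Q : Matrix n n ℝ}
    (hQ : G Q = 0) : Q = 0 := by
  by_contra h
  simpa [hQ] using hG Q h

theorem posSemidef_of_coercive_of_posSemidef_apply (hG : ∀ Q ≠ 0, 0 < (Qᵀ * G Q).trace)
    (hGt : ∀ Q, (G Q)ᵀ = G Qᵀ)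
    (hcross : ∀ P N, P.PosSemidef → N.PosSemidef → N * P = 0 → (N * G P).trace ≤ 0)
    {D : Matrix n n ℝ} (hD : (G D).PosSemidef) : D.PosSemidef := by
  have hsymm : D.IsSymm := by
    refine (sub_eq_zero.mp (eq_zero_of_coercive G hG ?_)).symm
    rw [map_sub, ← hGt, (isHermitian_iff_isSymm.mp hD.isHermitian).eq, sub_self]
  obtain ⟨P, N, hP, hN, hNP, rfl⟩ := (isHermitian_iff_isSymm.mpr hsymm).exists_posSemidef_sub
  suffices N = 0 by rwa [this, sub_zero]
  by_contra hne
  have hGN := hG N hne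
  rw [(isHermitian_iff_isSymm.mp hN.isHermitian).eq] at hGN
  have hND := hN.trace_mul_nonneg_s19 hD
  rw [map_sub, Matrix.mul_sub, trace_sub] at hND
  linarith [hcross P N hP hN hNP]

end Coercive

section StationaryCovariance

variable {γ : ℝ} {S : Matrix n n ℝ} {T : Matrix n n ℝ →ₗ[ℝ] Matrix n n ℝ}

theorem trace_mul_stationaryCovOp_nonpos (hγ : 0 ≤ γ) (hS : S.IsSymm)
    (hT : ∀ Q, Q.PosSemidef → (T Q).PosSemidef) {P N : Matrix n n ℝ} (hP : P.PosSemidef)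
    (hN : N.PosSemidef) (hNP : N * P = 0) : (N * stationaryCovOp γ S T P).trace ≤ 0 := by
  have hPN : P * N = 0 := by
    simpa [(isHermitian_iff_isSymm.mp hP.isHermitian).eq,
      (isHermitian_iff_isSymm.mp hN.isHermitian).eq] using congrArg transpose hNP
  have hSPS : (S * P * S).PosSemidef := by
    simpa [conjTranspose_eq_transpose_of_trivial, hS.eq] using hP.conjTranspose_mul_mul_same S
  have hNSPS := hN.trace_mul_nonneg_s19 hSPS
  have hNTP := hN.trace_mul_nonneg_s19 (hT P hP)
  have hcyc : (N * (S * P)).trace = 0 := by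
    rw [← Matrix.mul_assoc, trace_mul_cycle, hPN, Matrix.zero_mul, trace_zero]
  simp only [stationaryCovOp, LinearMap.coe_mk, AddHom.coe_mk, Matrix.mul_sub, Matrix.mul_add,
    Matrix.mul_smul, trace_sub, trace_add, trace_smul, smul_eq_mul, hcyc, ← Matrix.mul_assoc N P,
    hNP, Matrix.zero_mul, trace_zero]
  linarith [mul_nonneg hγ (add_nonneg hNSPS hNTP)]

theorem trace_transpose_mul_stationaryCovOp_pos (hS : S.PosDef) {L r : ℝ}
    (hL : ∀ v, v ⬝ᵥ (S *ᵥ v) ≤ L * (v ⬝ᵥ v))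
    (hT : ∀ Q, (Qᵀ * T Q).trace ≤ r ^ 2 * (Qᵀ * (S * Q * S)).trace)
    (hγ : 0 ≤ γ) (hγL : γ * ((1 + r ^ 2) * L) < 2) {Q : Matrix n n ℝ} (hQ : Q ≠ 0) :
    0 < (Qᵀ * stationaryCovOp γ S T Q).trace := by
  have hLS := posSemidef_smul_one_sub_of_dotProduct_mulVec_le hS.isHermitian hL
  have hleft := trace_transpose_mul_mul_mul_le_left hS.posSemidef hLS Q
  have hright := trace_transpose_mul_mul_mul_le_right hS.posSemidef hLS Q
  have hpos := hS.trace_transpose_mul_mul_pos hQ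
  have hnonneg : 0 ≤ (Qᵀ * (Q * S)).trace := by
    simpa [Matrix.mul_assoc] using
      (posSemidef_conjTranspose_mul_self Q).trace_mul_nonneg_s19 hS.posSemidef
  simp only [stationaryCovOp, LinearMap.coe_mk, AddHom.coe_mk, Matrix.mul_sub, Matrix.mul_add,
    Matrix.mul_smul, trace_sub, trace_add, trace_smul, smul_eq_mul]
  nlinarith [hT Q, mul_nonneg hγ (sq_nonneg r)]

end StationaryCovariance

theorem stmt19_general {d : ℕ} (N p : ℕ) (hN : 0 < N) (hp : 0 < p)
    (x : Fin N → Fin d → ℝ) (yv : Fin N → ℝ) (θs : Fin d → ℝ)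
    (σy2 σp2 γ L r : ℝ)
    (Sig : Matrix (Fin d) (Fin d) ℝ)
    (hSig : Sig.PosDef)
    (hL : ∀ v : Fin d → ℝ, v ⬝ᵥ (Sig *ᵥ v) ≤ L * (v ⬝ᵥ v))
    (B : Fin N → Matrix (Fin d) (Fin d) ℝ)
    (hB : ∀ i, B i = (1 / σy2) • vecMulVec (x i) (x i)
      + (1 / ((N : ℝ) * σp2)) • (1 : Matrix (Fin d) (Fin d) ℝ) - ((1 : ℝ) / N) • Sig)
    -- domination of the multiplicative-noise operator: `T ⪯ r² (Σ ⊗ Σ)`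
    (hr : ∀ Q : Matrix (Fin d) (Fin d) ℝ,
      (Qᵀ * (((N : ℝ) / p) • ∑ i, B i * Q * B i)).trace
        ≤ r ^ 2 * (Qᵀ * (Sig * Q * Sig)).trace)
    (hγ : γ ∈ Set.Ioo (0 : ℝ) (2 / ((1 + r ^ 2) * L)))
    (M : Matrix (Fin d) (Fin d) ℝ)
    (hM : M = ∑ i, vecMulVec
      ((1 / σy2) • ((x i ⬝ᵥ θs - yv i) • x i) + (1 / σp2) • θs)
      ((1 / σy2) • ((x i ⬝ᵥ θs - yv i) • x i) + (1 / σp2) • θs))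
    (CS CF : Matrix (Fin d) (Fin d) ℝ)
    (hCS : Sig * CS + CS * Sig
        - γ • (Sig * CS * Sig + ((N : ℝ) / p) • ∑ i, B i * CS * B i)
      = (2 : ℝ) • 1 + (γ * (N : ℝ) / p) • M)
    (hCF : Sig * CF + CF * Sig
        - γ • (Sig * CF * Sig + ((N : ℝ) / p) • ∑ i, B i * CF * B i)
      = (2 : ℝ) • 1) :
    (CS - CF).PosSemidef ∧ 0 ≤ (CS - CF).trace ∧ (CS.trace = CF.trace ↔ M = 0) := by
  obtain ⟨hγ0, hγ2⟩ := hγ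
  have hγL : γ * ((1 + r ^ 2) * L) < 2 :=
    (lt_div_iff₀ ((div_pos_iff_of_pos_left two_pos).mp (hγ0.trans hγ2))).mp hγ2
  have hc : 0 < γ * N / p := div_pos (mul_pos hγ0 (Nat.cast_pos.mpr hN)) (Nat.cast_pos.mpr hp)
  have hSigS : Sig.IsSymm := isHermitian_iff_isSymm.mp hSig.isHermitian
  have hBS (i : Fin N) : (B i).IsSymm := by
    rw [hB i]
    have hxx : (vecMulVec (x i) (x i)).IsSymm := transpose_vecMulVec _ _
    exact ((hxx.smul _).add (isSymm_one.smul _)).sub (hSigS.smul _)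
  have hMpsd : M.PosSemidef := by
    rw [hM]
    exact posSemidef_sum _ fun _ _ => posSemidef_vecMulVec_self_star _
  set G := stationaryCovOp γ Sig (noiseOp ((N : ℝ) / p) B)
  have hcoer (Q : Matrix (Fin d) (Fin d) ℝ) (hQ : Q ≠ 0) : 0 < (Qᵀ * G Q).trace :=
    trace_transpose_mul_stationaryCovOp_pos hSig hL hr hγ0.le hγL hQ
  have hGD : G (CS - CF) = (γ * N / p) • M := by
    rw [map_sub, show G CS = _ from hCS, show G CF = _ from hCF, add_sub_cancel_left]
  have hD : (CS - CF).PosSemidef :=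
    posSemidef_of_coercive_of_posSemidef_apply G hcoer
      (stationaryCovOp_transpose hSigS (noiseOp_transpose hBS))
      (fun _ _ hP hR => trace_mul_stationaryCovOp_nonpos hγ0.le hSigS
        (fun _ => noiseOp_posSemidef (by positivity) hBS) hP hR)
      (hGD ▸ hMpsd.smul hc.le)
  refine ⟨hD, hD.trace_nonneg, ?_⟩
  rw [← sub_eq_zero, ← trace_sub, hD.trace_eq_zero_iff]
  constructor
  · intro hD0
    rw [hD0, map_zero, eq_comm, smul_eq_zero] at hGD
    exact hGD.resolve_left hc.ne'
  · intro hM0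
    exact eq_zero_of_coercive G hcoer (by rw [hGD, hM0, smul_zero])

/-- Comparison of the stationary covariances of SGLD and SGLDFP in Bayesian linear
regression: with `G(Q) = ΣQ + QΣ - γ(ΣQΣ + T(Q))`, `G(C_SGLD) = 2Id + γ(N/p)M` and
`G(C_FP) = 2Id`, one has `C_SGLD ⪰ C_FP`, hence `Tr C_SGLD ≥ Tr C_FP`, with equality of
traces iff `M = 0`. -/
theorem stmt19 {d : ℕ} (N p : ℕ) (hN : 0 < N) (hp : 0 < p)
    (x : Fin N → Fin d → ℝ) (yv : Fin N → ℝ) (θs : Fin d → ℝ)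
    (σy2 σp2 γ L r : ℝ) (hσy : 0 < σy2) (hσp : 0 < σp2)
    (Sig : Matrix (Fin d) (Fin d) ℝ)
    (hSigdef : Sig = (1 / σp2) • (1 : Matrix (Fin d) (Fin d) ℝ)
      + (1 / σy2) • ∑ i, vecMulVec (x i) (x i))
    (hSig : Sig.PosDef)
    (hL : ∀ v : Fin d → ℝ, v ⬝ᵥ (Sig *ᵥ v) ≤ L * (v ⬝ᵥ v))
    (B : Fin N → Matrix (Fin d) (Fin d) ℝ)
    (hB : ∀ i, B i = (1 / σy2) • vecMulVec (x i) (x i)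
      + (1 / ((N : ℝ) * σp2)) • (1 : Matrix (Fin d) (Fin d) ℝ) - ((1 : ℝ) / N) • Sig)
    -- domination of the multiplicative-noise operator: `T ⪯ r² (Σ ⊗ Σ)`
    (hr : ∀ Q : Matrix (Fin d) (Fin d) ℝ,
      (Qᵀ * (((N : ℝ) / p) • ∑ i, B i * Q * B i)).trace
        ≤ r ^ 2 * (Qᵀ * (Sig * Q * Sig)).trace)
    (hγ : γ ∈ Set.Ioo (0 : ℝ) (2 / ((1 + r ^ 2) * L)))
    (M : Matrix (Fin d) (Fin d) ℝ)
    (hM : M = ∑ i, vecMulVec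
      ((1 / σy2) • ((x i ⬝ᵥ θs - yv i) • x i) + (1 / σp2) • θs)
      ((1 / σy2) • ((x i ⬝ᵥ θs - yv i) • x i) + (1 / σp2) • θs))
    (CS CF : Matrix (Fin d) (Fin d) ℝ)
    (hCS : Sig * CS + CS * Sig
        - γ • (Sig * CS * Sig + ((N : ℝ) / p) • ∑ i, B i * CS * B i)
      = (2 : ℝ) • 1 + (γ * (N : ℝ) / p) • M)
    (hCF : Sig * CF + CF * Sig
        - γ • (Sig * CF * Sig + ((N : ℝ) / p) • ∑ i, B i * CF * B i)
      = (2 : ℝ) • 1) :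
    (CS - CF).PosSemidef ∧ 0 ≤ (CS - CF).trace ∧ (CS.trace = CF.trace ↔ M = 0) :=
  stmt19_general N p hN hp x yv θs σy2 σp2 γ L r Sig hSig hL B hB hr hγ M hM CS CF hCS hCF
end
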